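/- Let f be analytic in the open unit disc Δ = {z ∈ ℂ : |z| < 1} with f(0) = 0 and f′(0) = 1, and suppose f(z) ≠ 0 for all z ∈ Δ with z ≠ 0. If f is starlike of order 1/2, i.e. Re(z·f′(z)/f(z)) > 1/2 for all z ∈ Δ with z ≠ 0, then Re(f(z)/z) > 1/2 for all z ∈ Δ with z ≠ 0. -/

import Mathlib

open Complex Metric Filter Set Topology

/-!
Write `f z = z h(z)` with `h = dslope f 0` and put `p = 1/h`, so `p 0 = 1` and
`z p'/p = 1 - z f'/f` has real part `< 1/2`; the claim `Re (1/p) > 1/2` says `|p - 1| < 1`.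
If `|p - 1| ≥ 1` somewhere, let `z₁` maximise `|p - 1|` on a closed disc around `0`.
By Jack's lemma `z₁ p'(z₁) = k (p(z₁) - 1)` with real `k ≥ 1`, and `|p(z₁) - 1| ≥ 1` means
`Re (1/p(z₁)) ≤ 1/2`, so `Re (z₁ p'/p) = k (1 - Re (1/p(z₁))) ≥ 1/2`, a contradiction.

Jack's lemma: `G ζ = w (ζ z₁) / w z₁` satisfies `|G ζ| ≤ |ζ|` on the closed unit disc (Schwarz)
and `G 1 = 1`. Hence `Re G ≤ 1` on the unit circle, forcing `G'(1)` to be real, and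
`Re G(t) ≤ t` for `t < 1`, forcing `G'(1) ≥ 1`.
-/

theorem HasDerivAt.nonneg_of_eventually_le_nhdsLT {ψ : ℝ → ℝ} {d a : ℝ} (h : HasDerivAt ψ d a)
    (hle : ∀ᶠ t in 𝓝[<] a, ψ t ≤ ψ a) : 0 ≤ d := by
  have hslope : Tendsto (slope ψ a) (𝓝[<] a) (𝓝 d) :=
    (hasDerivWithinAt_iff_tendsto_slope' self_notMem_Iio).1 h.hasDerivWithinAt
  refine ge_of_tendsto hslope ?_
  filter_upwards [hle, self_mem_nhdsWithin] with t hψt (ht : t < a)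
  rw [slope_def_field]
  exact div_nonneg_of_nonpos (by linarith) (by linarith)

theorem one_le_re_of_hasDerivAt_of_re_le {G : ℂ → ℂ} {k : ℂ} (hG : HasDerivAt G k 1)
    (hG1 : G 1 = 1) (hle : ∀ᶠ t : ℝ in 𝓝[<] 1, (G t).re ≤ t) : 1 ≤ k.re := by
  have hψ : HasDerivAt (fun t : ℝ => (G t).re - t) (k.re - 1) 1 :=
    (HasDerivAt.real_of_complex (e := G) (by simpa using hG)).sub (hasDerivAt_id 1)
  have := hψ.nonneg_of_eventually_le_nhdsLT (by
    filter_upwards [hle] with t ht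
    simp [hG1, ht])
  linarith

theorem im_eq_zero_of_hasDerivAt_of_re_le_one {G : ℂ → ℂ} {k : ℂ} (hG : HasDerivAt G k 1)
    (hG1 : G 1 = 1) (hle : ∀ᶠ θ : ℝ in 𝓝 0, (G (exp (θ * I))).re ≤ 1) : k.im = 0 := by
  have hexp : HasDerivAt (fun ζ : ℂ => exp (ζ * I)) I 0 := by
    simpa using ((hasDerivAt_id (0 : ℂ)).mul_const I).cexp
  have hG' : HasDerivAt G k (exp (0 * I)) := by simpa using hG
  have hcomp : HasDerivAt (fun ζ : ℂ => G (exp (ζ * I))) (k * I) ((0 : ℝ) : ℂ) := by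
    rw [ofReal_zero]
    exact hG'.comp (0 : ℂ) hexp
  have hmax : IsLocalMax (fun θ : ℝ => (G (exp (θ * I))).re) 0 := by
    filter_upwards [hle] with θ hθ
    simpa [hG1] using hθ
  simpa using hmax.hasDerivAt_eq_zero hcomp.real_of_complex

theorem norm_le_div_mul_norm_of_mapsTo_closedBall {w : ℂ → ℂ} {r M : ℝ} {z : ℂ}
    (hw : DifferentiableOn ℂ w (ball 0 r)) (hw0 : w 0 = 0)
    (hmaps : MapsTo w (closedBall 0 r) (closedBall 0 M)) (hz : ‖z‖ ≤ r) :
    ‖w z‖ ≤ M / r * ‖z‖ := by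
  rcases hz.lt_or_eq with hz | hz
  · have hball : MapsTo w (ball 0 r) (closedBall (w 0) M) := by
      rw [hw0]; exact hmaps.mono_left ball_subset_closedBall
    simpa [hw0] using dist_le_div_mul_dist_of_mapsTo_ball hw hball (mem_ball_zero_iff.2 hz)
  · rcases eq_or_ne z 0 with rfl | hz0
    · simp [hw0]
    have hr : r ≠ 0 := by rw [← hz]; exact norm_ne_zero_iff.2 hz0
    rw [hz, div_mul_cancel₀ M hr]
    exact mem_closedBall_zero_iff.1 (hmaps (mem_closedBall_zero_iff.2 hz.le))

theorem jack_lemma {w : ℂ → ℂ} {z₀ : ℂ} (hw : DifferentiableOn ℂ w (ball 0 ‖z₀‖))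
    (hwz₀ : DifferentiableAt ℂ w z₀) (hw0 : w 0 = 0)
    (hmax : IsMaxOn (‖w ·‖) (closedBall 0 ‖z₀‖) z₀) (hz₀ : w z₀ ≠ 0) :
    ∃ k : ℝ, 1 ≤ k ∧ z₀ * deriv w z₀ = k * w z₀ := by
  have hM : 0 < ‖w z₀‖ := norm_pos_iff.2 hz₀
  have hr : ‖z₀‖ ≠ 0 := norm_ne_zero_iff.2 (by rintro rfl; exact hz₀ hw0)
  set G : ℂ → ℂ := fun ζ => w (ζ * z₀) / w z₀
  have hG : HasDerivAt G (z₀ * deriv w z₀ / w z₀) 1 := by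
    have hw' : HasDerivAt w (deriv w z₀) (1 * z₀) := by simpa using hwz₀.hasDerivAt
    exact ((hw'.comp 1 ((hasDerivAt_id 1).mul_const z₀)).div_const (w z₀)).congr_deriv (by ring)
  have hG1 : G 1 = 1 := by simp [G, hz₀]
  have hmaps : MapsTo w (closedBall 0 ‖z₀‖) (closedBall 0 ‖w z₀‖) := fun z hz =>
    mem_closedBall_zero_iff.2 (hmax hz)
  have hGle : ∀ ζ : ℂ, ‖ζ‖ ≤ 1 → (G ζ).re ≤ ‖ζ‖ := by
    intro ζ hζ
    have hschwarz := norm_le_div_mul_norm_of_mapsTo_closedBall hw hw0 hmaps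
      (z := ζ * z₀) (by simpa [norm_mul] using mul_le_of_le_one_left (norm_nonneg z₀) hζ)
    refine (re_le_norm _).trans ?_
    rw [norm_div, div_le_iff₀ hM]
    calc ‖w (ζ * z₀)‖ ≤ ‖w z₀‖ / ‖z₀‖ * ‖ζ * z₀‖ := hschwarz
      _ = ‖ζ‖ * ‖w z₀‖ := by rw [norm_mul]; field_simp
  have hk_re := one_le_re_of_hasDerivAt_of_re_le hG hG1 <| by
    filter_upwards [Ioo_mem_nhdsLT (show (0 : ℝ) < 1 by norm_num)] with t ht
    simpa [abs_of_pos ht.1] using hGle t (by simpa [abs_of_pos ht.1] using ht.2.le)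
  have hk_im := im_eq_zero_of_hasDerivAt_of_re_le_one hG hG1 <| .of_forall fun θ => by
    simpa using hGle (exp (θ * I)) (by simp)
  refine ⟨_, hk_re, ?_⟩
  rw [← div_eq_iff hz₀]
  exact Complex.ext (by simp) (by simpa using hk_im)

theorem half_lt_re_inv_iff_norm_sub_one_lt_one {u : ℂ} (hu : u ≠ 0) :
    1 / 2 < (u⁻¹).re ↔ ‖u - 1‖ < 1 := by
  have hN : 0 < normSq u := normSq_pos.2 hu
  rw [inv_re, lt_div_iff₀ hN, ← sq_lt_one_iff₀ (norm_nonneg _), Complex.sq_norm, normSq_apply,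
    normSq_apply]
  simp only [sub_re, one_re, sub_im, one_im, sub_zero]
  constructor <;> intro h <;> nlinarith

theorem norm_sub_one_lt_one_of_re_mul_logDeriv_lt_half {p : ℂ → ℂ} {R : ℝ}
    (hp : DifferentiableOn ℂ p (ball 0 R)) (hp0 : p 0 = 1) (hne : ∀ z ∈ ball 0 R, p z ≠ 0)
    (hlt : ∀ z ∈ ball 0 R, (z * logDeriv p z).re < 1 / 2) :
    ∀ z ∈ ball 0 R, ‖p z - 1‖ < 1 := by
  by_contra! ⟨z₀, hz₀, hpz₀⟩
  have hsub : closedBall (0 : ℂ) ‖z₀‖ ⊆ ball 0 R :=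
    closedBall_subset_ball (mem_ball_zero_iff.1 hz₀)
  obtain ⟨z₁, hz₁, hmax⟩ := (isCompact_closedBall 0 ‖z₀‖).exists_isMaxOn
    (nonempty_closedBall.2 (norm_nonneg _))
    ((hp.continuousOn.mono hsub).sub continuousOn_const).norm
  have hz₁R : z₁ ∈ ball 0 R := hsub hz₁
  have hpz₁ : 1 ≤ ‖p z₁ - 1‖ := hpz₀.trans (hmax (mem_closedBall_zero_iff.2 le_rfl))
  obtain ⟨k, hk, hderiv⟩ := jack_lemma (w := fun z => p z - 1)
    ((hp.mono (ball_subset_ball (mem_ball_zero_iff.1 hz₁R).le)).sub_const 1)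
    ((hp.differentiableAt (isOpen_ball.mem_nhds hz₁R)).sub_const 1) (by simp [hp0])
    (hmax.on_subset (closedBall_subset_closedBall (mem_closedBall_zero_iff.1 hz₁)))
    (norm_pos_iff.1 (one_pos.trans_le hpz₁))
  have hre : ((p z₁)⁻¹).re ≤ 1 / 2 :=
    not_lt.1 fun h => ((half_lt_re_inv_iff_norm_sub_one_lt_one (hne z₁ hz₁R)).1 h).not_ge hpz₁
  have hlog : z₁ * logDeriv p z₁ = k * (1 - (p z₁)⁻¹) := by
    rw [deriv_sub_const] at hderiv
    rw [logDeriv_apply, ← mul_div_assoc, hderiv]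
    field_simp [hne z₁ hz₁R]
  have := hlt z₁ hz₁R
  rw [hlog, re_ofReal_mul, sub_re, one_re] at this
  nlinarith

theorem mul_logDeriv_inv_eq_one_sub_mul_logDeriv_mul {𝕜 : Type*} [NontriviallyNormedField 𝕜]
    {h : 𝕜 → 𝕜} {z : 𝕜} (hz : z ≠ 0) (hd : DifferentiableAt 𝕜 h z) (hne : h z ≠ 0) :
    z * logDeriv (fun z => (h z)⁻¹) z = 1 - z * logDeriv (fun z => z * h z) z := by
  have hinv := logDeriv_fun_zpow hd (-1)
  simp only [zpow_neg_one, Int.cast_neg, Int.cast_one] at hinv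
  rw [hinv, logDeriv_mul (f := fun z => z) z hz hne differentiableAt_fun_id hd, logDeriv_id']
  field_simp
  ring

theorem re_f_div_z_gt_half_of_starlike_half (f : ℂ → ℂ)
    (hf : DifferentiableOn ℂ f (ball (0:ℂ) 1))
    (hf0 : f 0 = 0) (hf'0 : deriv f 0 = 1)
    (hfne : ∀ z ∈ ball (0:ℂ) 1, z ≠ 0 → f z ≠ 0)
    (hstar : ∀ z ∈ ball (0:ℂ) 1, z ≠ 0 → 1 / 2 < (z * deriv f z / f z).re) :
    ∀ z ∈ ball (0:ℂ) 1, z ≠ 0 → 1 / 2 < (f z / z).re := by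
  set h := dslope f 0 with h_def
  have hh : DifferentiableOn ℂ h (ball 0 1) :=
    (Complex.differentiableOn_dslope (ball_mem_nhds 0 one_pos)).2 hf
  have hhz : ∀ z, z ≠ 0 → h z = f z / z := fun z hz => by
    rw [h_def, dslope_of_ne f hz, slope_def_field, hf0, sub_zero, sub_zero]
  have hfh : f = fun z => z * h z := funext fun z => by
    simpa [hf0, smul_eq_mul] using (sub_smul_dslope f 0 z).symm
  have hhne : ∀ z ∈ ball 0 1, h z ≠ 0 := fun z hz => by
    rcases eq_or_ne z 0 with rfl | hz0
    · simp [h, hf'0]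
    · rw [hhz z hz0]; exact div_ne_zero (hfne z hz hz0) hz0
  have key := norm_sub_one_lt_one_of_re_mul_logDeriv_lt_half (p := fun z => (h z)⁻¹)
    (hh.inv hhne) (by simp [h, hf'0]) (fun z hz => inv_ne_zero (hhne z hz)) fun z hz => by
      rcases eq_or_ne z 0 with rfl | hz0
      · simp
      rw [mul_logDeriv_inv_eq_one_sub_mul_logDeriv_mul hz0
        (hh.differentiableAt (isOpen_ball.mem_nhds hz)) (hhne z hz), ← hfh, sub_re, one_re,
        logDeriv_apply, ← mul_div_assoc]
      linarith [hstar z hz hz0]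
  intro z hz hz0
  rw [← hhz z hz0, ← inv_inv (h z),
    half_lt_re_inv_iff_norm_sub_one_lt_one (inv_ne_zero (hhne z hz))]
  exact key z hz
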